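/- Let v ∈ ℝ^{n+2} be a unit vector with J v = λ v, and let a = v(0)|0,R⟩ + Σ_{j=1}^{n} v(j)(√q|j,L⟩ + √p|j,R⟩) + v(n+1)|n+1,L⟩ and b = S a. (i) If λ = 1 or λ = −1, then U a = λ a, i.e., a is an eigenvector of U with eigenvalue λ. (ii) If −1 < λ < 1 and φ ∈ (0,π) satisfies cos φ = λ, then for each sign choice, U(a − e^{±iφ} b) = e^{±iφ}(a − e^{±iφ} b) and ‖a − e^{±iφ} b‖² = 2(1 − λ²); i.e., a − e^{±iφ} b are eigenvectors of U with eigenvalues e^{±iφ}. -/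

import Mathlib

open Filter Finset

/- Index convention for the Hilbert space `H_n` of dimension `2n+2`:
index `0` is `|0,R⟩`, index `2j-1` is `|j,L⟩` and `2j` is `|j,R⟩` for `1 ≤ j ≤ n`,
and index `2n+1` is `|n+1,L⟩`. -/

/-- Entries of the coin operator `C`. Column `l` is the image of the `l`-th basis vector. -/
noncomputable def coinEntry (p q : ℝ) (n k l : ℕ) : ℝ :=
  if l = 0 ∨ l = 2 * n + 1 then (if k = l then 1 else 0)
  else if l % 2 = 1 then
    (if k = l then 2 * q - 1 else if k = l + 1 then 2 * Real.sqrt (p * q) else 0)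
  else
    (if k = l then 2 * p - 1 else if k + 1 = l then 2 * Real.sqrt (p * q) else 0)

noncomputable def coinM (p q : ℝ) (n : ℕ) : Matrix (Fin (2 * n + 2)) (Fin (2 * n + 2)) ℂ :=
  fun k l => ((coinEntry p q n k.1 l.1 : ℝ) : ℂ)

/-- The shift operator: `S|j,R⟩ = |j+1,L⟩`, `S|j,L⟩ = |j-1,R⟩`; in our indexing,
`S e_l = e_{l+1}` for even `l` and `S e_l = e_{l-1}` for odd `l`. -/
def shiftM (n : ℕ) : Matrix (Fin (2 * n + 2)) (Fin (2 * n + 2)) ℂ :=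
  fun k l => if l.1 % 2 = 0 then (if k.1 = l.1 + 1 then 1 else 0)
             else (if k.1 + 1 = l.1 then 1 else 0)

/-- The walk operator `U = S C`. -/
noncomputable def walkM (p q : ℝ) (n : ℕ) : Matrix (Fin (2 * n + 2)) (Fin (2 * n + 2)) ℂ :=
  shiftM n * coinM p q n

/-- The `(n+2) × (n+2)` Jacobi matrix of the reflected random walk on the path:
zero diagonal, `J(0,1) = √q`, `J(i,i+1) = √(pq)` for `1 ≤ i ≤ n-1`, `J(n,n+1) = √p`,
and symmetric. -/
noncomputable def jacobiM (p q : ℝ) (n : ℕ) : Matrix (Fin (n + 2)) (Fin (n + 2)) ℝ :=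
  fun k l =>
    if k.1 + 1 = l.1 then
      (if k.1 = 0 then Real.sqrt q else if k.1 = n then Real.sqrt p else Real.sqrt (p * q))
    else if l.1 + 1 = k.1 then
      (if l.1 = 0 then Real.sqrt q else if l.1 = n then Real.sqrt p else Real.sqrt (p * q))
    else 0

/-- The lift `a ∈ H_n` of a vector `v ∈ ℝ^{n+2}`:
`a = v(0)|0,R⟩ + ∑_{j=1}^{n} v(j)(√q|j,L⟩ + √p|j,R⟩) + v(n+1)|n+1,L⟩`. -/
noncomputable def liftVec (p q : ℝ) (n : ℕ) (v : Fin (n + 2) → ℝ) : Fin (2 * n + 2) → ℂ :=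
  fun k =>
    if k.1 = 0 then ((v 0 : ℝ) : ℂ)
    else if k.1 = 2 * n + 1 then ((v (Fin.last (n + 1)) : ℝ) : ℂ)
    else (((if k.1 % 2 = 1 then Real.sqrt q else Real.sqrt p) *
      v ⟨(k.1 + 1) / 2, by have := k.isLt; omega⟩ : ℝ) : ℂ)


/- The lift `v ↦ a` is an isometry `A : ℝ^{n+2} → H_n`, the coin is the reflection
`C = 2AAᵀ - 1` about its range, and `AᵀSA = J`. Hence `Ca = a` and `C(Sa) = 2λa - Sa`, so
`U = SC` sends `a ↦ b` and `b ↦ 2λb - a`: on `span {a, b}` it acts with characteristic polynomial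
`μ² - 2λμ + 1`, whose roots are `e^{±iφ}`. Since `‖a‖ = ‖b‖ = 1` and `⟨a, b⟩ = λ`, we get `b = λa`
when `λ = ±1`, and `‖a - μb‖² = 2 - 2λ Re μ = 2(1 - λ²)` when `μ = e^{±iφ}`. -/

open Matrix

section SzegedyWalk

variable {R ι κ : Type*} [CommRing R] [Fintype ι] [Fintype κ]
  {A : Matrix ι κ R} {S : Matrix ι ι R} {v : κ → R} {c : R}

theorem dotProduct_mulVec_mulVec {κ' : Type*} [Fintype κ'] (A : Matrix ι κ R)
    (B : Matrix ι κ' R) (v : κ → R) (w : κ' → R) :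
    (A *ᵥ v) ⬝ᵥ (B *ᵥ w) = v ⬝ᵥ ((Aᵀ * B) *ᵥ w) := by
  rw [dotProduct_comm, dotProduct_mulVec, ← mulVec_transpose, mulVec_mulVec, dotProduct_comm]

theorem dotProduct_mulVec_self_of_transpose_mul_self [DecidableEq κ] (hA : Aᵀ * A = 1)
    (v : κ → R) : (A *ᵥ v) ⬝ᵥ (A *ᵥ v) = v ⬝ᵥ v := by
  rw [dotProduct_mulVec_mulVec, hA, one_mulVec]

theorem lift_dotProduct_shift_lift (hv : (Aᵀ * S * A) *ᵥ v = c • v) :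
    (A *ᵥ v) ⬝ᵥ (S *ᵥ (A *ᵥ v)) = c * (v ⬝ᵥ v) := by
  rw [mulVec_mulVec, dotProduct_mulVec_mulVec, ← Matrix.mul_assoc, hv, dotProduct_smul,
    smul_eq_mul]

theorem reflection_mulVec [DecidableEq ι] (A : Matrix ι κ R) (x : ι → R) :
    (2 • (A * Aᵀ) - 1) *ᵥ x = 2 • A *ᵥ (Aᵀ *ᵥ x) - x := by
  rw [sub_mulVec, smul_mulVec, mulVec_mulVec, one_mulVec]

theorem szegedy_mulVec_lift [DecidableEq ι] [DecidableEq κ] (hA : Aᵀ * A = 1) :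
    (S * (2 • (A * Aᵀ) - 1)) *ᵥ (A *ᵥ v) = S *ᵥ (A *ᵥ v) := by
  rw [← mulVec_mulVec, reflection_mulVec, mulVec_mulVec v Aᵀ, hA, one_mulVec, two_smul,
    add_sub_cancel_right]

theorem szegedy_mulVec_shift_lift [DecidableEq ι] (hS : S * S = 1)
    (hv : (Aᵀ * S * A) *ᵥ v = c • v) :
    (S * (2 • (A * Aᵀ) - 1)) *ᵥ (S *ᵥ (A *ᵥ v)) = (2 * c) • (S *ᵥ (A *ᵥ v)) - A *ᵥ v := by
  rw [← mulVec_mulVec, reflection_mulVec, mulVec_mulVec _ S, mulVec_mulVec _ Aᵀ,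
    ← Matrix.mul_assoc, hv]
  simp only [mulVec_sub, mulVec_smul, mulVec_mulVec, ← Matrix.mul_assoc, hS, Matrix.one_mul]
  module

theorem mulVec_sub_smul_eq_smul (U : Matrix ι ι R) {a b : ι → R} {μ : R}
    (ha : U *ᵥ a = b) (hb : U *ᵥ b = (2 * c) • b - a) (hμ : μ ^ 2 - 2 * c * μ + 1 = 0) :
    U *ᵥ (a - μ • b) = μ • (a - μ • b) := by
  rw [mulVec_sub, mulVec_smul, ha, hb]
  ext i
  simp only [Pi.sub_apply, Pi.smul_apply, smul_eq_mul]
  linear_combination b i * hμ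

end SzegedyWalk

theorem eq_smul_of_dotProduct_eq {ι : Type*} [Fintype ι] {a b : ι → ℝ} {c : ℝ}
    (ha : a ⬝ᵥ a = 1) (hb : b ⬝ᵥ b = 1) (hab : a ⬝ᵥ b = c) (hc : c ^ 2 = 1) : b = c • a := by
  have h : (b - c • a) ⬝ᵥ (b - c • a) = 0 := by
    simp only [sub_dotProduct, dotProduct_sub, smul_dotProduct, dotProduct_smul, smul_eq_mul,
      dotProduct_comm b a, ha, hb, hab]
    linear_combination -hc
  exact sub_eq_zero.mp (dotProduct_self_eq_zero.mp h)

theorem sum_norm_sq_ofReal_sub_smul {ι : Type*} [Fintype ι] (a b : ι → ℝ) {μ : ℂ}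
    (hμ : ‖μ‖ = 1) :
    ∑ k, ‖(Complex.ofReal ∘ a - μ • Complex.ofReal ∘ b) k‖ ^ 2 =
      a ⬝ᵥ a + b ⬝ᵥ b - 2 * μ.re * (a ⬝ᵥ b) := by
  have hμ2 : μ.re ^ 2 + μ.im ^ 2 = 1 := by
    have h := Complex.sq_norm μ
    rw [hμ, Complex.normSq_apply] at h
    linear_combination -h
  simp only [dotProduct, ← Finset.sum_add_distrib, Finset.mul_sum, ← Finset.sum_sub_distrib]
  refine Finset.sum_congr rfl fun k _ => ?_
  rw [Complex.sq_norm, Complex.normSq_apply]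
  simp only [Pi.sub_apply, Pi.smul_apply, Function.comp_apply, smul_eq_mul, Complex.sub_re,
    Complex.sub_im, Complex.mul_re, Complex.mul_im, Complex.ofReal_re, Complex.ofReal_im]
  linear_combination b k ^ 2 * hμ2

theorem map_ofReal_mulVec {m l : Type*} [Fintype l] (M : Matrix m l ℝ) (x : l → ℝ) :
    M.map Complex.ofReal *ᵥ (Complex.ofReal ∘ x) = Complex.ofReal ∘ (M *ᵥ x) :=
  funext fun i => (Complex.ofRealHom.map_mulVec M x i).symm

theorem exp_mul_I_sq_sub_two_cos_mul_add_one (θ : ℝ) :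
    Complex.exp (θ * Complex.I) ^ 2 - 2 * (Real.cos θ : ℂ) * Complex.exp (θ * Complex.I) + 1
      = 0 := by
  rw [Complex.exp_mul_I, Complex.ofReal_cos]
  linear_combination Complex.sin θ ^ 2 * Complex.I_sq - Complex.sin_sq_add_cos_sq (θ : ℂ)

section RealSzegedyWalk

variable {ι κ : Type*} [Fintype ι] [Fintype κ] [DecidableEq ι] [DecidableEq κ]
  {A : Matrix ι κ ℝ} {S : Matrix ι ι ℝ} {v : κ → ℝ} {c θ : ℝ}

theorem szegedy_mulVec_lift_eq_smul (hA : Aᵀ * A = 1) (hS : S * S = 1) (hSt : Sᵀ = S)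
    (hJ : (Aᵀ * S * A) *ᵥ v = c • v) (hv : v ⬝ᵥ v = 1) (hc : c ^ 2 = 1) :
    (S * (2 • (A * Aᵀ) - 1)) *ᵥ (A *ᵥ v) = c • (A *ᵥ v) := by
  have ha : (A *ᵥ v) ⬝ᵥ (A *ᵥ v) = 1 := by
    rw [dotProduct_mulVec_self_of_transpose_mul_self hA, hv]
  have hb : (S *ᵥ (A *ᵥ v)) ⬝ᵥ (S *ᵥ (A *ᵥ v)) = 1 := by
    rw [dotProduct_mulVec_self_of_transpose_mul_self (by rw [hSt, hS]), ha]
  rw [szegedy_mulVec_lift hA]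
  exact eq_smul_of_dotProduct_eq ha hb (by rw [lift_dotProduct_shift_lift hJ, hv, mul_one]) hc

theorem szegedy_map_mulVec_sub_exp_smul (hA : Aᵀ * A = 1) (hS : S * S = 1)
    (hJ : (Aᵀ * S * A) *ᵥ v = c • v) (hθ : Real.cos θ = c) :
    (S * (2 • (A * Aᵀ) - 1)).map Complex.ofReal *ᵥ
        (Complex.ofReal ∘ (A *ᵥ v) - Complex.exp (θ * Complex.I) •
          (S.map Complex.ofReal *ᵥ (Complex.ofReal ∘ (A *ᵥ v)))) =
      Complex.exp (θ * Complex.I) •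
        (Complex.ofReal ∘ (A *ᵥ v) - Complex.exp (θ * Complex.I) •
          (S.map Complex.ofReal *ᵥ (Complex.ofReal ∘ (A *ᵥ v)))) := by
  refine mulVec_sub_smul_eq_smul _ ?_ ?_ (hθ ▸ exp_mul_I_sq_sub_two_cos_mul_add_one θ)
  · simp only [map_ofReal_mulVec, szegedy_mulVec_lift hA]
  · simp only [map_ofReal_mulVec, szegedy_mulVec_shift_lift hS hJ]
    ext k
    simp

theorem sum_norm_sq_lift_sub_exp_smul_shift_lift (hA : Aᵀ * A = 1) (hS : S * S = 1)
    (hSt : Sᵀ = S) (hJ : (Aᵀ * S * A) *ᵥ v = c • v) (hv : v ⬝ᵥ v = 1) (hθ : Real.cos θ = c) :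
    ∑ k, ‖(Complex.ofReal ∘ (A *ᵥ v) - Complex.exp (θ * Complex.I) •
        (S.map Complex.ofReal *ᵥ (Complex.ofReal ∘ (A *ᵥ v)))) k‖ ^ 2 = 2 * (1 - c ^ 2) := by
  rw [map_ofReal_mulVec, sum_norm_sq_ofReal_sub_smul _ _ (Complex.norm_exp_ofReal_mul_I θ),
    Complex.exp_ofReal_mul_I_re, hθ, dotProduct_mulVec_self_of_transpose_mul_self (A := S)
      (by rw [hSt, hS]),
    dotProduct_mulVec_self_of_transpose_mul_self hA, lift_dotProduct_shift_lift hJ, hv]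
  ring

end RealSzegedyWalk

def site (n : ℕ) (k : Fin (2 * n + 2)) : Fin (n + 2) := ⟨(k.1 + 1) / 2, by omega⟩

noncomputable def liftWeight (p q : ℝ) (n : ℕ) (k : Fin (2 * n + 2)) : ℝ :=
  if k.1 = 0 ∨ k.1 = 2 * n + 1 then 1 else if k.1 % 2 = 1 then √q else √p

noncomputable def liftMatrix (p q : ℝ) (n : ℕ) : Matrix (Fin (2 * n + 2)) (Fin (n + 2)) ℝ :=
  Matrix.of fun k j => if site n k = j then liftWeight p q n k else 0

def pairSwap (n : ℕ) : Equiv.Perm (Fin (2 * n + 2)) :=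
  Function.Involutive.toPerm
    (fun k => ⟨if k.1 % 2 = 0 then k.1 + 1 else k.1 - 1, by split <;> omega⟩)
    (fun k => by ext; dsimp only; split_ifs <;> omega)

section Walk

variable {p q : ℝ} {n : ℕ}

theorem pairSwap_val (k : Fin (2 * n + 2)) :
    (pairSwap n k).1 = if k.1 % 2 = 0 then k.1 + 1 else k.1 - 1 :=
  rfl

theorem pairSwap_mul_self : pairSwap n * pairSwap n = 1 :=
  Equiv.ext (Function.Involutive.toPerm_involutive _)

theorem permMatrix_pairSwap_mul_self :
    (pairSwap n).permMatrix ℝ * (pairSwap n).permMatrix ℝ = 1 := by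
  rw [← permMatrix_mul, pairSwap_mul_self, permMatrix_one]

theorem transpose_permMatrix_pairSwap :
    ((pairSwap n).permMatrix ℝ)ᵀ = (pairSwap n).permMatrix ℝ := by
  rw [transpose_permMatrix, inv_eq_of_mul_eq_one_right pairSwap_mul_self]

theorem shiftM_eq_map : shiftM n = ((pairSwap n).permMatrix ℝ).map Complex.ofReal := by
  ext k l
  simp only [shiftM, map_apply, PEquiv.toMatrix_toPEquiv_apply, Pi.single_apply, Fin.ext_iff,
    pairSwap_val]
  split_ifs <;> first | omega | simp

theorem liftMatrix_mulVec (v : Fin (n + 2) → ℝ) (k : Fin (2 * n + 2)) :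
    (liftMatrix p q n *ᵥ v) k = liftWeight p q n k * v (site n k) := by
  simp [liftMatrix, mulVec, dotProduct, ite_mul]

theorem liftVec_eq (v : Fin (n + 2) → ℝ) :
    liftVec p q n v = Complex.ofReal ∘ (liftMatrix p q n *ᵥ v) := by
  ext k
  simp only [Function.comp_apply, liftMatrix_mulVec, liftVec, liftWeight, site]
  split_ifs <;> first | omega | rfl | (rw [one_mul]; congr 2; ext; simp; omega)

theorem liftMatrix_mul_transpose_apply (k l : Fin (2 * n + 2)) :
    (liftMatrix p q n * (liftMatrix p q n)ᵀ) k l =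
      if site n k = site n l then liftWeight p q n k * liftWeight p q n l else 0 := by
  simp [liftMatrix, mul_apply, ite_mul, mul_ite]

theorem coinM_eq (hp : 0 ≤ p) (hq : 0 ≤ q) :
    coinM p q n = (2 • (liftMatrix p q n * (liftMatrix p q n)ᵀ) - 1).map Complex.ofReal := by
  ext k l
  simp only [coinM, map_apply, Matrix.sub_apply, Matrix.smul_apply, one_apply,
    liftMatrix_mul_transpose_apply]
  norm_cast
  have hsp := Real.mul_self_sqrt hp
  have hsq := Real.mul_self_sqrt hq
  have hspq := Real.sqrt_mul hp q
  simp only [coinEntry, liftWeight, site, Fin.ext_iff]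
  split_ifs <;> first | omega | (simp_all <;> linarith)

theorem walkM_eq_map (hp : 0 ≤ p) (hq : 0 ≤ q) :
    walkM p q n = ((pairSwap n).permMatrix ℝ *
      (2 • (liftMatrix p q n * (liftMatrix p q n)ᵀ) - 1)).map Complex.ofReal := by
  rw [walkM, shiftM_eq_map, coinM_eq hp hq]
  exact (Matrix.map_mul (f := Complex.ofRealHom)).symm

theorem transpose_liftMatrix_mul_apply {m : Type*} (M : Matrix (Fin (2 * n + 2)) m ℝ)
    (i : Fin (n + 2)) (j : m) :
    ((liftMatrix p q n)ᵀ * M) i j =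
      ∑ k ∈ univ.filter (fun k => site n k = i), liftWeight p q n k * M k j := by
  simp [liftMatrix, mul_apply, ite_mul, Finset.sum_filter]

theorem filter_site_eq_of_val_eq_zero {i : Fin (n + 2)} (hi : i.1 = 0) :
    univ.filter (fun k => site n k = i) = {0} := by
  ext k
  simp only [mem_filter, mem_univ, true_and, mem_singleton, Fin.ext_iff, site, Fin.val_zero]
  omega

theorem filter_site_eq_of_val_eq_last {i : Fin (n + 2)} (hi : i.1 = n + 1) :
    univ.filter (fun k => site n k = i) = {Fin.last (2 * n + 1)} := by
  ext k
  simp only [mem_filter, mem_univ, true_and, mem_singleton, Fin.ext_iff, site, Fin.val_last]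
  omega

theorem filter_site_eq_pair {i : Fin (n + 2)} (h1 : 1 ≤ i.1) (hn : i.1 ≤ n) :
    univ.filter (fun k => site n k = i) = {⟨2 * i - 1, by omega⟩, ⟨2 * i, by omega⟩} := by
  ext k
  simp only [mem_filter, mem_univ, true_and, mem_insert, mem_singleton, Fin.ext_iff, site]
  omega

theorem liftMatrix_transpose_mul_self (hp : 0 ≤ p) (hq : 0 ≤ q) (hpq : p + q = 1) :
    (liftMatrix p q n)ᵀ * liftMatrix p q n = 1 := by
  ext i j
  rw [transpose_liftMatrix_mul_apply]
  have hsp := Real.mul_self_sqrt hp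
  have hsq := Real.mul_self_sqrt hq
  obtain hi | hi | ⟨h1, hn⟩ : i.1 = 0 ∨ i.1 = n + 1 ∨ (1 ≤ i.1 ∧ i.1 ≤ n) := (by omega)
  <;> [rw [filter_site_eq_of_val_eq_zero hi, sum_singleton];
    rw [filter_site_eq_of_val_eq_last hi, sum_singleton];
    rw [filter_site_eq_pair h1 hn, sum_pair (by simp [Fin.ext_iff]; omega)]]
  all_goals
    simp only [liftMatrix, liftWeight, site, one_apply, of_apply, Fin.ext_iff, Fin.val_zero,
      Fin.val_last]
    split_ifs <;> first | omega | (simp_all <;> linarith)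

theorem liftMatrix_transpose_mul_pairSwap_mul (hn : 1 ≤ n) (hp : 0 ≤ p) :
    (liftMatrix p q n)ᵀ * (pairSwap n).permMatrix ℝ * liftMatrix p q n = jacobiM p q n := by
  ext i j
  rw [Matrix.mul_assoc, PEquiv.toMatrix_toPEquiv_mul, transpose_liftMatrix_mul_apply]
  have hspq := Real.sqrt_mul hp q
  obtain hi | hi | ⟨h1, hn⟩ : i.1 = 0 ∨ i.1 = n + 1 ∨ (1 ≤ i.1 ∧ i.1 ≤ n) := (by omega)
  <;> [rw [filter_site_eq_of_val_eq_zero hi, sum_singleton];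
    rw [filter_site_eq_of_val_eq_last hi, sum_singleton];
    rw [filter_site_eq_pair h1 hn, sum_pair (by simp [Fin.ext_iff]; omega)]]
  all_goals
    simp only [liftMatrix, liftWeight, site, jacobiM, submatrix_apply, id, of_apply,
      Fin.ext_iff, pairSwap_val, Fin.val_zero, Fin.val_last, true_or, or_true, ↓reduceIte]
    -- settle the conditions not involving `j` first: splitting on all of them is exponential
    simp (disch := omega) only [if_pos, if_neg]
    split_ifs <;> first | omega | (simp_all <;> linarith)

end Walk

theorem walkM_eigenvectors_from_jacobi_general (n : ℕ) (hn : 1 ≤ n)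
    (p q : ℝ) (hp0 : 0 < p) (hq0 : 0 < q) (hpq : p + q = 1)
    (lam : ℝ) (v : Fin (n + 2) → ℝ)
    (hv : ∑ j : Fin (n + 2), (v j) ^ 2 = 1)
    (heig : (jacobiM p q n).mulVec v = lam • v) :
    ((lam = 1 ∨ lam = -1) →
      (walkM p q n).mulVec (liftVec p q n v) = ((lam : ℝ) : ℂ) • liftVec p q n v) ∧
    (-1 < lam → lam < 1 → ∀ φ : ℝ, φ ∈ Set.Ioo 0 Real.pi → Real.cos φ = lam →
      ∀ ε : ℝ, ε = 1 ∨ ε = -1 →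
        (walkM p q n).mulVec
            (liftVec p q n v -
              Complex.exp (((ε * φ : ℝ) : ℂ) * Complex.I) •
                (shiftM n).mulVec (liftVec p q n v)) =
          Complex.exp (((ε * φ : ℝ) : ℂ) * Complex.I) •
            (liftVec p q n v -
              Complex.exp (((ε * φ : ℝ) : ℂ) * Complex.I) •
                (shiftM n).mulVec (liftVec p q n v)) ∧
        ∑ k : Fin (2 * n + 2),
            Norm.norm
              ((liftVec p q n v -
                Complex.exp (((ε * φ : ℝ) : ℂ) * Complex.I) •
                  (shiftM n).mulVec (liftVec p q n v)) k) ^ 2 =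
          2 * (1 - lam ^ 2)) := by
  rw [walkM_eq_map hp0.le hq0.le, shiftM_eq_map, liftVec_eq]
  have hA := liftMatrix_transpose_mul_self (n := n) hp0.le hq0.le hpq
  have hJ :
      ((liftMatrix p q n)ᵀ * (pairSwap n).permMatrix ℝ * liftMatrix p q n) *ᵥ v = lam • v := by
    rwa [liftMatrix_transpose_mul_pairSwap_mul hn hp0.le]
  have hv : v ⬝ᵥ v = 1 := by simpa [dotProduct, sq] using hv
  refine ⟨fun hlam => ?_, fun _ _ φ _ hcos ε hε => ?_⟩
  · rw [map_ofReal_mulVec, szegedy_mulVec_lift_eq_smul hA permMatrix_pairSwap_mul_self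
      transpose_permMatrix_pairSwap hJ hv (by rcases hlam with rfl | rfl <;> norm_num)]
    ext k
    simp
  · have hθ : Real.cos (ε * φ) = lam := by rcases hε with rfl | rfl <;> simp [hcos]
    exact ⟨szegedy_map_mulVec_sub_exp_smul hA permMatrix_pairSwap_mul_self hJ hθ,
      sum_norm_sq_lift_sub_exp_smul_shift_lift hA permMatrix_pairSwap_mul_self
        transpose_permMatrix_pairSwap hJ hv hθ⟩

/-- **Lemma (eigenvectors of `U` from eigenvectors of `J`).** Let `v` be a unit
eigenvector of `J` with eigenvalue `λ`, `a` its lift and `b = S a`.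
(i) If `λ = ±1` then `U a = λ a`.
(ii) If `-1 < λ < 1` and `φ ∈ (0,π)` satisfies `cos φ = λ`, then for each sign `ε = ±1`,
`U(a - e^{iεφ} b) = e^{iεφ}(a - e^{iεφ} b)` and `‖a - e^{iεφ} b‖² = 2(1 - λ²)`. -/
theorem walkM_eigenvectors_from_jacobi (n : ℕ) (hn : 1 ≤ n)
    (p q : ℝ) (hp0 : 0 < p) (hp1 : p < 1) (hq0 : 0 < q) (hq1 : q < 1) (hpq : p + q = 1)
    (lam : ℝ) (v : Fin (n + 2) → ℝ)
    (hv : ∑ j : Fin (n + 2), (v j) ^ 2 = 1)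
    (heig : (jacobiM p q n).mulVec v = lam • v) :
    ((lam = 1 ∨ lam = -1) →
      (walkM p q n).mulVec (liftVec p q n v) = ((lam : ℝ) : ℂ) • liftVec p q n v) ∧
    (-1 < lam → lam < 1 → ∀ φ : ℝ, φ ∈ Set.Ioo 0 Real.pi → Real.cos φ = lam →
      ∀ ε : ℝ, ε = 1 ∨ ε = -1 →
        (walkM p q n).mulVec
            (liftVec p q n v -
              Complex.exp (((ε * φ : ℝ) : ℂ) * Complex.I) •
                (shiftM n).mulVec (liftVec p q n v)) =
          Complex.exp (((ε * φ : ℝ) : ℂ) * Complex.I) •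
            (liftVec p q n v -
              Complex.exp (((ε * φ : ℝ) : ℂ) * Complex.I) •
                (shiftM n).mulVec (liftVec p q n v)) ∧
        ∑ k : Fin (2 * n + 2),
            Norm.norm
              ((liftVec p q n v -
                Complex.exp (((ε * φ : ℝ) : ℂ) * Complex.I) •
                  (shiftM n).mulVec (liftVec p q n v)) k) ^ 2 =
          2 * (1 - lam ^ 2)) :=
  walkM_eigenvectors_from_jacobi_general n hn p q hp0 hq0 hpq lam v hv heig
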